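/- Let P and Q be equivalence relations on a set U, and let {(A_i, B_i)}_{i∈I} be a family of pairs in IRS(P+Q). Then the pair (⋃_{i∈I} A_i, (⋃_{i∈I} B_i)^{P+Q}) also belongs to IRS(P+Q): it satisfies (⋃ A_i)_{P+Q} = ⋃ A_i, ((⋃ B_i)^{P+Q})^{P+Q} = (⋃ B_i)^{P+Q}, ⋃ A_i ⊆ (⋃ B_i)^{P+Q}, and ((⋃ B_i)^{P+Q} \ ⋃ A_i) ∩ (Σ_P ∪ Σ_Q) = ∅; moreover it is the least upper bound of the family in IRS(P+Q) under the componentwise inclusion order. -/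
import Mathlib


/-- The R-neighbourhood of x: R(x) = {y : x R y}. -/
def nbhd {α : Type*} (R : α → α → Prop) (x : α) : Set α := {y | R x y}

/-- Lower R-approximation: X_R = {x : R(x) ⊆ X}. -/
def lowerApprox {α : Type*} (R : α → α → Prop) (X : Set α) : Set α :=
  {x | nbhd R x ⊆ X}

/-- Upper R-approximation: X^R = {x : R(x) ∩ X ≠ ∅}. -/
def upperApprox {α : Type*} (R : α → α → Prop) (X : Set α) : Set α :=
  {x | (nbhd R x ∩ X).Nonempty}

/-- Optimistic lower approximation: X_{P+Q} = X_P ∪ X_Q. -/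
def optLower {α : Type*} (P Q : α → α → Prop) (X : Set α) : Set α :=
  lowerApprox P X ∪ lowerApprox Q X

/-- Optimistic upper approximation: X^{P+Q} = X^P ∩ X^Q. -/
def optUpper {α : Type*} (P Q : α → α → Prop) (X : Set α) : Set α :=
  upperApprox P X ∩ upperApprox Q X

/-- Coherence: for every x, P(x) ⊆ Q(x) or Q(x) ⊆ P(x). -/
def Coherent {α : Type*} (P Q : α → α → Prop) : Prop :=
  ∀ x, nbhd P x ⊆ nbhd Q x ∨ nbhd Q x ⊆ nbhd P x

/-- Membership in IRS(P+Q): A is optimistic-lower-closed, B is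
optimistic-upper-closed, A ⊆ B, and no element whose P-class or Q-class is a
singleton lies in B \ A. -/
def IRS {α : Type*} (P Q : α → α → Prop) (A B : Set α) : Prop :=
  optLower P Q A = A ∧ optUpper P Q B = B ∧ A ⊆ B ∧
  ∀ x ∈ B \ A, ¬(nbhd P x = {x} ∨ nbhd Q x = {x})


lemma upper_mono' {α : Type*} (R : α → α → Prop) {X Y : Set α} (hXY : X ⊆ Y) :
    upperApprox R X ⊆ upperApprox R Y := by
  rintro x ⟨y, hy1, hy2⟩; exact ⟨y, hy1, hXY hy2⟩

lemma lower_mono' {α : Type*} (R : α → α → Prop) {X Y : Set α} (hXY : X ⊆ Y) :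
    lowerApprox R X ⊆ lowerApprox R Y := fun x hx => hx.trans hXY

lemma subset_upper' {α : Type*} {R : α → α → Prop} (hr : ∀ x, R x x) (X : Set α) :
    X ⊆ upperApprox R X := fun x hx => ⟨x, hr x, hx⟩

lemma upper_trans' {α : Type*} {R : α → α → Prop}
    (ht : ∀ {a b c}, R a b → R b c → R a c) {X : Set α} {x y : α}
    (hxy : R x y) (hy : y ∈ upperApprox R X) : x ∈ upperApprox R X := by
  obtain ⟨z, hz1, hz2⟩ := hy
  exact ⟨z, ht hxy hz1, hz2⟩

/-- IRS(P+Q) is closed under (componentwise) joins: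
(⋃ A_i, (⋃ B_i)^{P+Q}) belongs to IRS(P+Q) and is the least upper bound of
the family {(A_i, B_i)} in the componentwise inclusion order. -/
theorem stmt_17 {α : Type*} (P Q : α → α → Prop)
    (hP : Equivalence P) (hQ : Equivalence Q)
    {I : Sort*} (A B : I → Set α)
    (h : ∀ i, IRS P Q (A i) (B i)) :
    IRS P Q (⋃ i, A i) (optUpper P Q (⋃ i, B i)) ∧
    (∀ i, A i ⊆ (⋃ j, A j) ∧ B i ⊆ optUpper P Q (⋃ j, B j)) ∧
    (∀ C D : Set α, IRS P Q C D → (∀ i, A i ⊆ C ∧ B i ⊆ D) →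
      (⋃ i, A i) ⊆ C ∧ optUpper P Q (⋃ i, B i) ⊆ D) := by
  have rP : ∀ x, P x x := fun x => hP.refl x
  have rQ : ∀ x, Q x x := fun x => hQ.refl x
  have hBu : (⋃ i, B i) ⊆ optUpper P Q (⋃ i, B i) :=
    fun x hx => ⟨subset_upper' rP _ hx, subset_upper' rQ _ hx⟩
  have hAB : (⋃ i, A i) ⊆ optUpper P Q (⋃ i, B i) := by
    rintro x hx
    obtain ⟨i, hi⟩ := Set.mem_iUnion.1 hx
    exact hBu (Set.mem_iUnion.2 ⟨i, (h i).2.2.1 hi⟩)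
  refine ⟨⟨?_, ?_, hAB, ?_⟩, ?_, ?_⟩
  · apply Set.Subset.antisymm
    · rintro x (hx | hx)
      · exact hx (rP x)
      · exact hx (rQ x)
    · intro x hx
      obtain ⟨i, hi⟩ := Set.mem_iUnion.1 hx
      rw [← (h i).1] at hi
      rcases hi with hi | hi
      · exact Or.inl (lower_mono' P (Set.subset_iUnion A i) hi)
      · exact Or.inr (lower_mono' Q (Set.subset_iUnion A i) hi)
  · apply Set.Subset.antisymm
    · rintro x ⟨hx1, hx2⟩
      obtain ⟨y, hxy, hyP, _⟩ := hx1
      obtain ⟨y', hxy', _, hy'Q⟩ := hx2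
      have h1 : P x y := hxy
      have h2 : Q x y' := hxy'
      obtain ⟨z, hz1, hz2⟩ := hyP
      obtain ⟨z', hz1', hz2'⟩ := hy'Q
      exact ⟨⟨z, hP.trans h1 hz1, hz2⟩, ⟨z', hQ.trans h2 hz1', hz2'⟩⟩
    · exact fun x hx => ⟨subset_upper' rP _ hx, subset_upper' rQ _ hx⟩
  · rintro x ⟨hxB, hxA⟩ hsing
    have key : ∀ (R : α → α → Prop), nbhd R x = {x} → x ∈ upperApprox R (⋃ i, B i) → False := by
      intro R hR hx
      obtain ⟨y, hy1, hy2⟩ := hx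
      rw [hR, Set.mem_singleton_iff] at hy1
      rw [hy1] at hy2
      obtain ⟨i, hi⟩ := Set.mem_iUnion.1 hy2
      have hxAi : x ∉ A i := fun hc => hxA (Set.mem_iUnion.2 ⟨i, hc⟩)
      exact (h i).2.2.2 x ⟨hi, hxAi⟩ hsing
    rcases hsing with hs | hs
    · exact key P hs hxB.1
    · exact key Q hs hxB.2
  · exact fun i => ⟨Set.subset_iUnion A i, fun x hx => hBu (Set.mem_iUnion.2 ⟨i, hx⟩)⟩
  · rintro C D ⟨_, hD, _, _⟩ hCD
    refine ⟨Set.iUnion_subset (fun i => (hCD i).1), ?_⟩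
    have : (⋃ i, B i) ⊆ D := Set.iUnion_subset (fun i => (hCD i).2)
    intro x hx
    rw [← hD]
    exact ⟨upper_mono' P this hx.1, upper_mono' Q this hx.2⟩
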